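/- For all 1 ≤ i < j ≤ q, the identity C_{i,j} = M_{i,j} + Σ_{k=i+1}^{j−1} M_{i,k} C_{k,j} holds in A (the terms of C_{i,j} grouped according to the first element of the admissible sequence which is greater than i). -/

import Mathlib

open scoped BigOperators

/-- A finite sequence of positive integers is *admissible* if between any two
occurrences of a number `s` there is an entry greater than `s`. -/
def IsAdmissible (l : List ℕ) : Prop :=
  ∀ (l₁ l₂ l₃ : List ℕ) (s : ℕ), l = l₁ ++ s :: (l₂ ++ s :: l₃) → ∃ t ∈ l₂, s < t

/-- `Dset n` is the set of admissible sequences all of whose entries lie in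
`{1, …, n-1}` (including the empty sequence). -/
def Dset (n : ℕ) : Set (List ℕ) :=
  {l | IsAdmissible l ∧ ∀ x ∈ l, 1 ≤ x ∧ x < n}

/-- The product `B i i₁ * B i₁ i₂ * ⋯ * B i_c j` along a sequence `[i₁, …, i_c]`;
the empty sequence contributes `B i j`. -/
def pathProd {A : Type*} [Ring A] (B : ℕ → ℕ → A) (i j : ℕ) : List ℕ → A
  | [] => B i j
  | a :: l => B i a * pathProd B a j l

/-- `M i j = Σ_{(i₁,…,i_c) ∈ D_{min(i,j)}} B i i₁ ⋯ B i_c j`. -/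
noncomputable def Mpoly {A : Type*} [Ring A] (B : ℕ → ℕ → A) (i j : ℕ) : A :=
  ∑ᶠ l ∈ Dset (min i j), pathProd B i j l

/-- `C i j` for `i < j` sums `B i i₁ ⋯ B i_c j` over sequences with
`(i, i₁, …, i_c) ∈ D_j`; and `C n n = M n n`. -/
noncomputable def Cpoly {A : Type*} [Ring A] (B : ℕ → ℕ → A) (i j : ℕ) : A :=
  if i = j then Mpoly B i j
  else ∑ᶠ l ∈ {l : List ℕ | (i :: l) ∈ Dset j}, pathProd B i j l

/-- The generators `B_{i,j}` of the free noncommutative unital ℤ-algebra. -/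
noncomputable def Bgen : ℕ → ℕ → FreeAlgebra ℤ (ℕ × ℕ) :=
  fun i j => FreeAlgebra.ι ℤ (i, j)

/-- The commuting indeterminates `B_{i,j}` of the polynomial ring `ℤ[B_{i,j}]`. -/
noncomputable def Bcomm : ℕ → ℕ → MvPolynomial (ℕ × ℕ) ℤ :=
  fun i j => MvPolynomial.X (i, j)

/-!
Every sequence `l` with `i :: l ∈ D_j` either has all entries below `i`, so `l ∈ D_i`, or
splits uniquely as `l₀ ++ k :: l'` at its first entry `k > i`; then `l₀ ∈ D_i` (no entry of
`l₀` equals `i`, as `i` heads an admissible list), `k :: l' ∈ D_j` and `i < k < j`. Conversely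
every such splice lies back in the set, since `k` exceeds every entry of `i :: l₀`. Path
products multiply under splicing, so the sum splits accordingly, in any ring.
-/

lemma IsAdmissible.infix {L l : List ℕ} (hL : IsAdmissible L) (h : l <:+: L) :
    IsAdmissible l := by
  obtain ⟨p, q, rfl⟩ := h
  intro l₁ l₂ l₃ s hl
  exact hL (p ++ l₁) l₂ (l₃ ++ q) s (by simp [hl])

lemma IsAdmissible.cons {a : ℕ} {l : List ℕ} (hl : IsAdmissible l) (hlt : ∀ x ∈ l, x < a) :
    IsAdmissible (a :: l) := by
  rintro (_ | ⟨b, l₁⟩) l₂ l₃ s h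
  · obtain ⟨rfl, rfl⟩ : a = s ∧ l = l₂ ++ s :: l₃ := by simpa using h
    exact absurd (hlt a (by simp)) (lt_irrefl a)
  · exact hl l₁ l₂ l₃ s (List.cons.inj h).2

lemma IsAdmissible.append_cons {u v : List ℕ} {k : ℕ} (hu : IsAdmissible u)
    (hv : IsAdmissible (k :: v)) (hlt : ∀ x ∈ u, x < k) :
    IsAdmissible (u ++ k :: v) := by
  -- Either both occurrences of `s` lie in `k :: v`, or the first lies in `u`, so `s < k`, and
  -- then either both lie in `u` or `k` sits between them.
  intro l₁ l₂ l₃ s h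
  rcases List.append_eq_append_iff.1 h with ⟨a, -, hv'⟩ | ⟨c, rfl, hc⟩
  · exact hv a l₂ l₃ s hv'
  rcases List.cons_eq_append_iff.1 hc with ⟨rfl, hk⟩ | ⟨c, rfl, hc₂⟩
  · exact hv [] l₂ l₃ s (by simpa using hk)
  have hsk : s < k := hlt s (by simp)
  rcases List.append_eq_append_iff.1 hc₂ with ⟨a, rfl, ha⟩ | ⟨c', rfl, hc'⟩
  · rcases List.cons_eq_append_iff.1 ha with ⟨rfl, hk⟩ | ⟨a, rfl, -⟩
    · exact absurd (List.cons.inj hk).1 hsk.ne'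
    · exact hu l₁ l₂ a s (by simp)
  · rcases List.cons_eq_append_iff.1 hc' with ⟨rfl, hk⟩ | ⟨c'', rfl, -⟩
    · exact absurd (List.cons.inj hk).1 hsk.ne
    · exact ⟨k, by simp, hsk⟩

lemma IsAdmissible.head_notMem {a : ℕ} {l u : List ℕ} (h : IsAdmissible (a :: l)) (hu : u <+: l)
    (hle : ∀ x ∈ u, x ≤ a) : a ∉ u := by
  intro ha
  obtain ⟨v, rfl⟩ := hu
  obtain ⟨u₁, u₂, rfl⟩ := List.append_of_mem ha
  obtain ⟨t, ht, hat⟩ := h [] u₁ (u₂ ++ v) a (by simp)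
  exact absurd (hle t (by simp [ht])) hat.not_ge

lemma List.exists_eq_append_cons_of_exists {α : Type*} {p : α → Prop} [DecidablePred p]
    {l : List α} (h : ∃ x ∈ l, p x) :
    ∃ l₀ a l', l = l₀ ++ a :: l' ∧ (∀ x ∈ l₀, ¬ p x) ∧ p a := by
  obtain ⟨a, ha⟩ := Option.isSome_iff_exists.1
    (List.find?_isSome (p := fun x => decide (p x)) |>.2 (by simpa using h))
  obtain ⟨hpa, l₀, l', rfl, hl₀⟩ := List.find?_eq_some_iff_append.1 ha
  exact ⟨l₀, a, l', rfl, fun x hx => by simpa using hl₀ x hx, by simpa using hpa⟩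

lemma List.eq_of_append_cons_eq {α : Type*} {p : α → Prop} [DecidablePred p]
    {l₀ m₀ l' m' : List α} {a b : α} (hl₀ : ∀ x ∈ l₀, ¬ p x) (hm₀ : ∀ x ∈ m₀, ¬ p x)
    (ha : p a) (hb : p b) (h : l₀ ++ a :: l' = m₀ ++ b :: m') :
    l₀ = m₀ ∧ a :: l' = b :: m' := by
  have htake := congrArg (List.takeWhile fun x => !decide (p x)) h
  have hdrop := congrArg (List.dropWhile fun x => !decide (p x)) h
  have hl₀' : ∀ x ∈ l₀, (!decide (p x)) = true := by simpa using hl₀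
  have hm₀' : ∀ x ∈ m₀, (!decide (p x)) = true := by simpa using hm₀
  simp only [List.takeWhile_append_of_pos hl₀', List.takeWhile_append_of_pos hm₀',
    List.dropWhile_append_of_pos hl₀', List.dropWhile_append_of_pos hm₀'] at htake hdrop
  simp_all

def appendCons (k : ℕ) (p : List ℕ × List ℕ) : List ℕ := p.1 ++ k :: p.2

/-- The largest value `n` occurs at most once, so the list is `u ++ n :: v` with `u` and `v`
bounded by `n`. -/
lemma finite_setOf_isAdmissible_forall_lt (n : ℕ) :
    {l : List ℕ | IsAdmissible l ∧ ∀ x ∈ l, x < n}.Finite := by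
  induction n with
  | zero =>
    refine (Set.finite_singleton []).subset fun l hl => ?_
    cases l with
    | nil => rfl
    | cons a _ => exact absurd (hl.2 a (by simp)) (Nat.not_lt_zero a)
  | succ n ih =>
    refine (ih.union ((ih.prod ih).image (appendCons n))).subset ?_
    rintro l ⟨hl, hlt⟩
    by_cases hn : ∃ x ∈ l, n ≤ x
    · obtain ⟨u, k, v, rfl, hu, hk⟩ := List.exists_eq_append_cons_of_exists hn
      obtain rfl : k = n := le_antisymm (Nat.lt_succ_iff.1 (hlt k (by simp))) hk
      have hkv : IsAdmissible (k :: v) := hl.infix ⟨u, [], by simp⟩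
      have hv_le : ∀ x ∈ v, x ≤ k := fun x hx => Nat.lt_succ_iff.1 (hlt x (by simp [hx]))
      have hk_notMem : k ∉ v := hkv.head_notMem (List.prefix_refl v) hv_le
      refine Or.inr ⟨(u, v), ⟨⟨hl.infix ⟨[], k :: v, by simp⟩, fun x hx => ?_⟩,
        ⟨hkv.infix ⟨[k], [], by simp⟩, fun x hx => ?_⟩⟩, rfl⟩
      · exact Nat.lt_of_not_le (hu x hx)
      · exact lt_of_le_of_ne (hv_le x hx) (by rintro rfl; exact hk_notMem hx)
    · push Not at hn
      exact Or.inl ⟨hl, hn⟩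

lemma Dset_finite (n : ℕ) : (Dset n).Finite :=
  (finite_setOf_isAdmissible_forall_lt n).subset fun _ hl =>
    ⟨hl.1, fun x hx => (hl.2 x hx).2⟩

lemma finite_setOf_cons_mem_Dset (i j : ℕ) : {l : List ℕ | i :: l ∈ Dset j}.Finite :=
  (Dset_finite j).preimage List.cons_injective.injOn

lemma mem_Dset_of_infix {l L : List ℕ} {n : ℕ} (h : l <:+: L) (hL : L ∈ Dset n) : l ∈ Dset n :=
  ⟨hL.1.infix h, fun x hx => hL.2 x (h.subset hx)⟩

lemma cons_mem_Dset {i j : ℕ} {l : List ℕ} (hi : 1 ≤ i) (hij : i < j) (hl : l ∈ Dset i) :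
    i :: l ∈ Dset j := by
  refine ⟨hl.1.cons fun x hx => (hl.2 x hx).2, ?_⟩
  simp only [List.mem_cons, forall_eq_or_imp]
  exact ⟨⟨hi, hij⟩, fun x hx => ⟨(hl.2 x hx).1, (hl.2 x hx).2.trans hij⟩⟩

lemma append_cons_mem_Dset {u v : List ℕ} {j k : ℕ} (hu : u ∈ Dset k)
    (hv : k :: v ∈ Dset j) : u ++ k :: v ∈ Dset j := by
  refine ⟨hu.1.append_cons hv.1 fun x hx => (hu.2 x hx).2, fun x hx => ?_⟩
  rcases List.mem_append.1 hx with hx | hx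
  · exact ⟨(hu.2 x hx).1, (hu.2 x hx).2.trans (hv.2 k (by simp)).2⟩
  · exact hv.2 x hx

lemma mem_Dset_of_prefix {i j : ℕ} {l u : List ℕ} (h : i :: l ∈ Dset j) (hu : u <+: l)
    (hle : ∀ x ∈ u, x ≤ i) : u ∈ Dset i := by
  have hi : i ∉ u := h.1.head_notMem hu hle
  have hinf : u <:+: i :: l := List.infix_cons hu.isInfix
  refine ⟨h.1.infix hinf, fun x hx => ⟨(h.2 x (hinf.subset hx)).1, ?_⟩⟩
  exact lt_of_le_of_ne (hle x hx) (by rintro rfl; exact hi hx)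

lemma setOf_cons_mem_Dset_eq {i j : ℕ} (hi : 1 ≤ i) (hij : i < j) :
    {l | i :: l ∈ Dset j} = Dset i ∪
      ⋃ k ∈ (Finset.Ioo i j : Set ℕ), appendCons k '' (Dset i ×ˢ {l | k :: l ∈ Dset j}) := by
  ext l
  simp only [Set.mem_ofPred_eq, Set.mem_union, Set.mem_iUnion, Finset.coe_Ioo, Set.mem_Ioo,
    exists_prop, Set.mem_image, Set.mem_prod, Prod.exists, appendCons]
  constructor
  · intro hl
    by_cases hgt : ∃ x ∈ l, i < x
    · obtain ⟨l₀, k, l', rfl, hl₀, hik⟩ := List.exists_eq_append_cons_of_exists hgt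
      push Not at hl₀
      exact Or.inr ⟨k, ⟨hik, (hl.2 k (by simp)).2⟩, l₀, l',
        ⟨mem_Dset_of_prefix hl (List.prefix_append _ _) hl₀,
          mem_Dset_of_infix ⟨i :: l₀, [], by simp⟩ hl⟩, rfl⟩
    · push Not at hgt
      exact Or.inl (mem_Dset_of_prefix hl (List.prefix_refl l) hgt)
  · rintro (hl | ⟨k, ⟨hik, -⟩, l₀, l', ⟨hl₀, hl'⟩, rfl⟩)
    · exact cons_mem_Dset hi hij hl
    · exact append_cons_mem_Dset (u := i :: l₀) (cons_mem_Dset hi hik hl₀) hl'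

lemma disjoint_Dset_range_appendCons {i k : ℕ} (hik : i ≤ k) :
    Disjoint (Dset i) (Set.range (appendCons k)) := by
  rw [Set.disjoint_right]
  rintro _ ⟨p, rfl⟩ hp
  exact absurd (hp.2 k (by simp [appendCons])).2 hik.not_gt

lemma appendCons_eq_appendCons {i k k' : ℕ} {p p' : List ℕ × List ℕ} (hp : p.1 ∈ Dset i)
    (hp' : p'.1 ∈ Dset i) (hik : i < k) (hik' : i < k') (h : appendCons k p = appendCons k' p') :
    k = k' ∧ p = p' := by
  have hlt : ∀ l ∈ Dset i, ∀ x ∈ l, ¬ i < x := fun l hl x hx => (hl.2 x hx).2.le.not_gt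
  obtain ⟨h₁, h₂⟩ := List.eq_of_append_cons_eq (hlt _ hp) (hlt _ hp') hik hik' h
  obtain ⟨rfl, h₃⟩ := List.cons.inj h₂
  exact ⟨rfl, Prod.ext h₁ h₃⟩

lemma pairwiseDisjoint_image_appendCons {i : ℕ} (S : ℕ → Set (List ℕ)) :
    (Set.Ioi i).PairwiseDisjoint fun k => appendCons k '' (Dset i ×ˢ S k) := by
  intro k hk k' hk' hne
  refine Set.disjoint_left.2 ?_
  rintro _ ⟨p, hp, rfl⟩ ⟨p', hp', h⟩
  exact hne (appendCons_eq_appendCons hp.1 hp'.1 hk hk' h.symm).1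

lemma pathProd_append_cons {A : Type*} [Ring A] (B : ℕ → ℕ → A) (i j k : ℕ) (u v : List ℕ) :
    pathProd B i j (u ++ k :: v) = pathProd B i k u * pathProd B k j v := by
  induction u generalizing i with
  | nil => rfl
  | cons a u ih => simp only [List.cons_append, pathProd, ih, mul_assoc]

lemma finsum_mem_mul_finsum_mem {α β R : Type*} [NonUnitalNonAssocSemiring R] {s : Set α}
    {t : Set β} (hs : s.Finite) (ht : t.Finite) (f : α → R) (g : β → R) :
    (∑ᶠ a ∈ s, f a) * (∑ᶠ b ∈ t, g b) = ∑ᶠ p ∈ s ×ˢ t, f p.1 * g p.2 := by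
  rw [← hs.coe_toFinset, ← ht.coe_toFinset, ← Finset.coe_product, finsum_mem_coe_finset,
    finsum_mem_coe_finset, finsum_mem_coe_finset, Finset.sum_mul_sum, Finset.sum_product]

lemma finsum_mem_image_appendCons {A : Type*} [Ring A] (B : ℕ → ℕ → A) {i j k : ℕ}
    (hik : i < k) {S : Set (List ℕ)} (hS : S.Finite) :
    ∑ᶠ l ∈ appendCons k '' (Dset i ×ˢ S), pathProd B i j l =
      (∑ᶠ l ∈ Dset i, pathProd B i k l) * ∑ᶠ l ∈ S, pathProd B k j l := by
  have hinj : Set.InjOn (appendCons k) (Dset i ×ˢ S) :=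
    fun p hp p' hp' h => (appendCons_eq_appendCons hp.1 hp'.1 hik hik h).2
  rw [finsum_mem_image hinj, finsum_mem_mul_finsum_mem (Dset_finite i) hS]
  exact finsum_mem_congr rfl fun p _ => pathProd_append_cons B i j k p.1 p.2

theorem Cpoly_eq_Mpoly_add_sum {A : Type*} [Ring A] (B : ℕ → ℕ → A) {i j : ℕ} (hi : 1 ≤ i)
    (hij : i < j) :
    Cpoly B i j = Mpoly B i j + ∑ k ∈ Finset.Ioo i j, Mpoly B i k * Cpoly B k j := by
  set T : ℕ → Set (List ℕ) := fun k => appendCons k '' (Dset i ×ˢ {l | k :: l ∈ Dset j})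
  have hT_fin : ∀ k ∈ (Finset.Ioo i j : Set ℕ), (T k).Finite :=
    fun k _ => ((Dset_finite i).prod (finite_setOf_cons_mem_Dset k j)).image _
  have hT_disj : Disjoint (Dset i) (⋃ k ∈ (Finset.Ioo i j : Set ℕ), T k) :=
    Set.disjoint_iUnion₂_right.2 fun k hk =>
      (disjoint_Dset_range_appendCons (Finset.mem_Ioo.1 hk).1.le).mono_right
        (Set.image_subset_range _ _)
  have hT_pw : (Finset.Ioo i j : Set ℕ).PairwiseDisjoint T :=
    (pairwiseDisjoint_image_appendCons _).subset fun k hk => (Finset.mem_Ioo.1 hk).1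
  rw [Cpoly, if_neg hij.ne, setOf_cons_mem_Dset_eq hi hij,
    finsum_mem_union hT_disj (Dset_finite i) ((Finset.Ioo i j).finite_toSet.biUnion hT_fin),
    finsum_mem_biUnion hT_pw (Finset.Ioo i j).finite_toSet hT_fin, finsum_mem_coe_finset, Mpoly,
    min_eq_left hij.le]
  congr 1
  refine Finset.sum_congr rfl fun k hk => ?_
  obtain ⟨hik, hkj⟩ := Finset.mem_Ioo.1 hk
  rw [finsum_mem_image_appendCons B hik (finite_setOf_cons_mem_Dset k j), Mpoly,
    min_eq_left hik.le, Cpoly, if_neg hkj.ne]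

theorem C_eq_M_add_sum_MC_general (i j : ℕ) (hi : 1 ≤ i) (hij : i < j) :
    Cpoly Bgen i j =
      Mpoly Bgen i j + ∑ k ∈ Finset.Ioo i j, Mpoly Bgen i k * Cpoly Bgen k j :=
  Cpoly_eq_Mpoly_add_sum Bgen hi hij

/-- `C_{i,j} = M_{i,j} + Σ_{k=i+1}^{j-1} M_{i,k} C_{k,j}` for `1 ≤ i < j ≤ q`. -/
theorem C_eq_M_add_sum_MC (q i j : ℕ) (hi : 1 ≤ i) (hij : i < j) (hjq : j ≤ q) :
    Cpoly Bgen i j =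
      Mpoly Bgen i j + ∑ k ∈ Finset.Ioo i j, Mpoly Bgen i k * Cpoly Bgen k j :=
  C_eq_M_add_sum_MC_general i j hi hij
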